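/- For n≥2, there is a surjective group homomorphism f: B(Ã_n) → B(A_n) sending σ_i ↦ σ_i for 1≤i≤n and a_{n+1} ↦ σ_n^{-1}σ_{n-1}^{-1}⋯σ_2^{-1}σ_1σ_2⋯σ_{n-1}σ_n, and its kernel equals the normal closure N_e in B(Ã_n) of the single element e = a_{n+1}^{-1}σ_n^{-1}σ_{n-1}^{-1}⋯σ_2^{-1}σ_1σ_2⋯σ_{n-1}σ_n; consequently the quotient B(Ã_n)/N_e is isomorphic to B(A_n). -/

import Mathlib

/-- Relators of the `A`-type braid group `B(A n)`: generator `i : Fin n` stands for `σ_{i+1}`. -/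
def braidRelsA (n : ℕ) : Set (FreeGroup (Fin n)) :=
  { r | (∃ i j : Fin n, (i : ℕ) + 2 ≤ (j : ℕ) ∧
          r = FreeGroup.of i * FreeGroup.of j * (FreeGroup.of j * FreeGroup.of i)⁻¹) ∨
        (∃ i j : Fin n, (j : ℕ) = (i : ℕ) + 1 ∧
          r = FreeGroup.of i * FreeGroup.of j * FreeGroup.of i *
              (FreeGroup.of j * FreeGroup.of i * FreeGroup.of j)⁻¹) }

/-- The `A`-type braid group `B(A_n)` with `n` generators `σ_1, …, σ_n`. -/
abbrev BraidA (n : ℕ) : Type := PresentedGroup (braidRelsA n)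

/-- Relators of the affine braid group `B(Ã_n)`: generator `some i` (`i : Fin n`)
stands for `σ_{i+1}`, and `none` stands for `a_{n+1}`. -/
def braidRelsAff (n : ℕ) : Set (FreeGroup (Option (Fin n))) :=
  { r | (∃ i j : Fin n, (i : ℕ) + 2 ≤ (j : ℕ) ∧
          r = FreeGroup.of (some i) * FreeGroup.of (some j) *
              (FreeGroup.of (some j) * FreeGroup.of (some i))⁻¹) ∨
        (∃ i j : Fin n, (j : ℕ) = (i : ℕ) + 1 ∧
          r = FreeGroup.of (some i) * FreeGroup.of (some j) * FreeGroup.of (some i) *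
              (FreeGroup.of (some j) * FreeGroup.of (some i) * FreeGroup.of (some j))⁻¹) ∨
        (∃ i : Fin n, 1 ≤ (i : ℕ) ∧ (i : ℕ) + 2 ≤ n ∧
          r = FreeGroup.of (some i) * FreeGroup.of none *
              (FreeGroup.of none * FreeGroup.of (some i))⁻¹) ∨
        (∃ i : Fin n, ((i : ℕ) = 0 ∨ (i : ℕ) + 1 = n) ∧
          r = FreeGroup.of (some i) * FreeGroup.of none * FreeGroup.of (some i) *
              (FreeGroup.of none * FreeGroup.of (some i) * FreeGroup.of none)⁻¹) }

/-- The affine (`Ã`-type) braid group `B(Ã_n)`, with generators `σ_1, …, σ_n` and `a_{n+1}`. -/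
abbrev BraidAff (n : ℕ) : Type := PresentedGroup (braidRelsAff n)

/-- `b = σ_n⁻¹ σ_{n-1}⁻¹ ⋯ σ_2⁻¹ σ_1 σ_2 ⋯ σ_{n-1} σ_n` in `B(A_n)`. -/
noncomputable def bA (n : ℕ) (h : 0 < n) : BraidA n :=
  ((((List.finRange n).drop 1).map fun i => (PresentedGroup.of i : BraidA n)).prod)⁻¹ *
    PresentedGroup.of (⟨0, h⟩ : Fin n) *
    (((List.finRange n).drop 1).map fun i => (PresentedGroup.of i : BraidA n)).prod

/-- The word `σ_n⁻¹ σ_{n-1}⁻¹ ⋯ σ_2⁻¹ σ_1 σ_2 ⋯ σ_{n-1} σ_n`, read in `B(Ã_n)`. -/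
noncomputable def bAff (n : ℕ) (h : 0 < n) : BraidAff n :=
  ((((List.finRange n).drop 1).map fun i => (PresentedGroup.of (some i) : BraidAff n)).prod)⁻¹ *
    PresentedGroup.of (some (⟨0, h⟩ : Fin n)) *
    (((List.finRange n).drop 1).map fun i => (PresentedGroup.of (some i) : BraidAff n)).prod

/-- `e = a_{n+1}⁻¹ σ_n⁻¹ ⋯ σ_2⁻¹ σ_1 σ_2 ⋯ σ_n` in `B(Ã_n)`. -/
noncomputable def eAff (n : ℕ) (h : 0 < n) : BraidAff n :=
  (PresentedGroup.of none)⁻¹ * bAff n h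

/-!
Writing `b_m = (σ_2 ⋯ σ_{m+1})⁻¹ σ_1 (σ_2 ⋯ σ_{m+1})`, induction on `m` shows that `b_m` commutes
with `σ_2, …, σ_m` and with `σ_{m+3}, σ_{m+4}, …`, and satisfies the braid relation with `σ_1`,
`σ_{m+1}` and `σ_{m+2}`: each step conjugates a braid or commutation relation by an element
commuting with one of its two sides. For `m = n - 1` these are the relations of `a_{n+1}` in
`B(Ã_n)`, so `f` exists. The inclusion `σ_i ↦ σ_i` of `B(A_n)` into `B(Ã_n)` is a section of `f`,
and followed by the quotient map it inverts `f` modulo `N_e`, since `e ∈ N_e` says exactly that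
`a_{n+1}` and the image of `b` agree there. Hence `f` is onto with kernel `N_e`.
-/

section Braids

variable {G H : Type*} [Group G] [Group H]

def Braids (x y : G) : Prop := x * y * x = y * x * y

theorem Braids.refl (x : G) : Braids x x := rfl

theorem Braids.symm {x y : G} (h : Braids x y) : Braids y x := Eq.symm h

theorem Braids.map {x y : G} (h : Braids x y) (φ : G →* H) : Braids (φ x) (φ y) := by
  unfold Braids at h ⊢
  simp only [← map_mul, h]

theorem Braids.inv_mul_mul_eq {x y : G} (h : Braids x y) : x⁻¹ * y * x = y * x * y⁻¹ :=
  calc x⁻¹ * y * x = x⁻¹ * (y * x * y) * y⁻¹ := by group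
    _ = x⁻¹ * (x * y * x) * y⁻¹ := by rw [h]
    _ = y * x * y⁻¹ := by group

theorem Braids.conj_right {x y : G} (c : G) (hc : Commute x c) (h : Braids x y) :
    Braids x (c * y * c⁻¹) := by
  have hx : c * x * c⁻¹ = x := by rw [← hc.eq, mul_inv_cancel_right]
  have := h.map (MulAut.conj c).toMonoidHom
  simpa only [MulEquiv.coe_toMonoidHom, MulAut.conj_apply, hx] using this

/-- Conjugation by `s * t` carries `s` to `t`. -/
theorem Braids.commute_conj {s t v : G} (h : Braids s t) (hv : Commute v t) :
    Commute s (t⁻¹ * (s⁻¹ * v * s) * t) := by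
  have hs : (s * t)⁻¹ * t * (s * t) = s :=
    calc (s * t)⁻¹ * t * (s * t) = (s * t)⁻¹ * (t * s * t) := by group
      _ = (s * t)⁻¹ * (s * t * s) := by rw [h]
      _ = s := by group
  rw [show t⁻¹ * (s⁻¹ * v * s) * t = (s * t)⁻¹ * v * (s * t) by group]
  simpa only [MulAut.conj_apply, inv_inv, hs] using (hv.map (MulAut.conj (s * t)⁻¹)).symm

end Braids

section ConjChain

variable {G : Type*} [Group G]

def conjChain (s : ℕ → G) : ℕ → G
  | 0 => s 0
  | m + 1 => (s (m + 1))⁻¹ * conjChain s m * s (m + 1)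

structure IsBraidSeq (s : ℕ → G) (n : ℕ) : Prop where
  commute : ∀ i j, i + 2 ≤ j → j < n → Commute (s i) (s j)
  braids : ∀ i, i + 1 < n → Braids (s i) (s (i + 1))

variable {s : ℕ → G} {n : ℕ}

theorem conjChain_eq_prod (s : ℕ → G) (m : ℕ) :
    conjChain s m =
      (((List.range' 1 m).map s).prod)⁻¹ * s 0 * ((List.range' 1 m).map s).prod := by
  induction m with
  | zero => simp [conjChain]
  | succ m ih =>
    rw [conjChain, ih, List.range'_concat]
    simp [mul_assoc, add_comm]

namespace IsBraidSeq

theorem commute_conjChain_of_add_two_le (hs : IsBraidSeq s n) {m j : ℕ} (hj : m + 2 ≤ j)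
    (hjn : j < n) : Commute (s j) (conjChain s m) := by
  induction m with
  | zero => exact (hs.commute 0 j hj hjn).symm
  | succ m ih =>
    have hc := (hs.commute (m + 1) j (by omega) hjn).symm
    exact (hc.inv_right.mul_right (ih (by omega))).mul_right hc

theorem braids_succ_conjChain (hs : IsBraidSeq s n) {m : ℕ} (hm : m + 1 < n) :
    Braids (s (m + 1)) (conjChain s m) := by
  induction m with
  | zero => exact (hs.braids 0 hm).symm
  | succ m ih =>
    rw [conjChain, (ih (by omega)).inv_mul_mul_eq]
    exact (hs.braids (m + 1) hm).symm.conj_right _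
      (hs.commute_conjChain_of_add_two_le le_rfl hm)

theorem braids_zero_conjChain (hs : IsBraidSeq s n) {m : ℕ} (hm : m < n) :
    Braids (s 0) (conjChain s m) := by
  induction m with
  | zero => exact Braids.refl _
  | succ m ih =>
    rcases m with _ | m
    · rw [conjChain, conjChain, (hs.braids 0 hm).symm.inv_mul_mul_eq]
      exact (hs.braids 0 hm).conj_right _ (Commute.refl _)
    · rw [conjChain]
      simpa only [inv_inv] using (ih (by omega)).conj_right (s (m + 2))⁻¹
        (hs.commute 0 (m + 2) (by omega) hm).inv_right

theorem braids_conjChain (hs : IsBraidSeq s n) {m : ℕ} (hm : m < n) :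
    Braids (s m) (conjChain s m) := by
  rcases m with _ | m
  · exact Braids.refl _
  · rw [conjChain]
    simpa only [inv_inv] using (hs.braids_succ_conjChain hm).conj_right (s (m + 1))⁻¹
      (Commute.refl _).inv_right

theorem commute_conjChain_of_lt (hs : IsBraidSeq s n) {j m : ℕ} (hj : 1 ≤ j) (hjm : j < m)
    (hm : m < n) : Commute (s j) (conjChain s m) := by
  obtain ⟨i, rfl⟩ : ∃ i, j = i + 1 := ⟨j - 1, by omega⟩
  induction m, hjm using Nat.le_induction with
  | base =>
    exact (hs.braids (i + 1) hm).commute_conj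
      (hs.commute_conjChain_of_add_two_le le_rfl hm).symm
  | succ m hm' ih =>
    have hc := hs.commute (i + 1) (m + 1) (by omega) hm
    exact (hc.inv_right.mul_right (ih (by omega))).mul_right hc

end IsBraidSeq

end ConjChain

theorem MonoidHom.ker_eq_of_comp_eq_mk' {G H : Type*} [Group G] [Group H] (f : G →* H)
    {N : Subgroup G} [N.Normal] (hN : N ≤ f.ker) (g : H →* G ⧸ N)
    (hg : g.comp f = QuotientGroup.mk' N) : f.ker = N := by
  refine le_antisymm (fun x hx => ?_) hN
  rw [← QuotientGroup.eq_one_iff, ← QuotientGroup.mk'_apply, ← hg, MonoidHom.comp_apply,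
    f.mem_ker.mp hx, map_one]

theorem map_some_mem_braidRelsAff {n : ℕ} {r : FreeGroup (Fin n)} (hr : r ∈ braidRelsA n) :
    FreeGroup.map some r ∈ braidRelsAff n := by
  rcases hr with ⟨i, j, h, rfl⟩ | ⟨i, j, h, rfl⟩
  · exact Or.inl ⟨i, j, h, by simp⟩
  · exact Or.inr (Or.inl ⟨i, j, h, by simp⟩)

namespace BraidA

variable (n : ℕ)

noncomputable def gen (k : ℕ) : BraidA n :=
  if h : k < n then PresentedGroup.of (⟨k, h⟩ : Fin n) else 1

theorem gen_of_lt {k : ℕ} (h : k < n) : gen n k = PresentedGroup.of ⟨k, h⟩ := dif_pos h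

theorem gen_val (i : Fin n) : gen n i = PresentedGroup.of i := dif_pos i.isLt

variable {n}

theorem commute_of_of {i j : Fin n} (h : (i : ℕ) + 2 ≤ j) :
    Commute (PresentedGroup.of i : BraidA n) (PresentedGroup.of j) := by
  have := PresentedGroup.mk_eq_mk_of_mul_inv_mem (rels := braidRelsA n) (Or.inl ⟨i, j, h, rfl⟩)
  simp only [map_mul] at this
  exact this

theorem braids_of_of {i j : Fin n} (h : (j : ℕ) = i + 1) :
    Braids (PresentedGroup.of i : BraidA n) (PresentedGroup.of j) := by
  have := PresentedGroup.mk_eq_mk_of_mul_inv_mem (rels := braidRelsA n) (Or.inr ⟨i, j, h, rfl⟩)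
  simp only [map_mul] at this
  exact this

variable (n)

theorem isBraidSeq_gen : IsBraidSeq (gen n) n where
  commute i j hij hj := by
    rw [gen_of_lt n (by omega), gen_of_lt n hj]
    exact commute_of_of hij
  braids i hi := by
    rw [gen_of_lt n (by omega), gen_of_lt n hi]
    exact braids_of_of rfl

theorem bA_eq_conjChain (h : 0 < n) : bA n h = conjChain (gen n) (n - 1) := by
  have hl : ((List.finRange n).drop 1).map PresentedGroup.of =
      (List.range' 1 (n - 1)).map (gen n) := by
    rw [show List.range' 1 (n - 1) = ((List.finRange n).map Fin.val).drop 1 by simp,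
      ← List.map_drop, List.map_map]
    exact List.map_congr_left fun i _ => (gen_val n i).symm
  rw [bA, conjChain_eq_prod, hl, gen_of_lt n h]

variable {n}

theorem lift_eq_one_of_mem_braidRelsAff (h : 0 < n) :
    ∀ r ∈ braidRelsAff n,
      FreeGroup.lift (fun o : Option (Fin n) => o.elim (bA n h) PresentedGroup.of) r = 1 := by
  have hs := isBraidSeq_gen n
  rintro r (⟨i, j, hij, rfl⟩ | ⟨i, j, hij, rfl⟩ | ⟨i, hi, hin, rfl⟩ | ⟨i, hi | hi, rfl⟩) <;>
    simp only [map_mul, map_inv, FreeGroup.lift_apply_of, Option.elim_none, Option.elim_some,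
      mul_inv_eq_one]
  · exact commute_of_of hij
  · exact braids_of_of hij
  · rw [bA_eq_conjChain, ← gen_val]
    exact hs.commute_conjChain_of_lt hi (by omega) (by omega)
  · obtain rfl : i = ⟨0, h⟩ := Fin.ext hi
    rw [bA_eq_conjChain, ← gen_of_lt]
    exact hs.braids_zero_conjChain (by omega)
  · rw [bA_eq_conjChain, ← gen_val, show (i : ℕ) = n - 1 by omega]
    exact hs.braids_conjChain (by omega)

variable (n)

noncomputable def toBraidAff : BraidA n →* BraidAff n :=
  PresentedGroup.toGroup (f := fun i => PresentedGroup.of (some i)) fun r hr => by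
    have hlift : FreeGroup.lift (fun i => (PresentedGroup.of (some i) : BraidAff n)) =
        (PresentedGroup.mk _).comp (FreeGroup.map some) :=
      FreeGroup.ext_hom _ _ fun _ => rfl
    rw [hlift, MonoidHom.comp_apply]
    exact PresentedGroup.one_of_mem (map_some_mem_braidRelsAff hr)

variable {n}

@[simp]
theorem toBraidAff_of (i : Fin n) :
    toBraidAff n (PresentedGroup.of i) = PresentedGroup.of (some i) :=
  PresentedGroup.toGroup.of _

theorem toBraidAff_bA (h : 0 < n) : toBraidAff n (bA n h) = bAff n h := by
  simp [bAff, bA, map_list_prod, Function.comp_def]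

end BraidA

namespace BraidAff

noncomputable def toBraidA (n : ℕ) (h : 0 < n) : BraidAff n →* BraidA n :=
  PresentedGroup.toGroup (BraidA.lift_eq_one_of_mem_braidRelsAff h)

variable {n : ℕ} (h : 0 < n)

@[simp]
theorem toBraidA_of_some (i : Fin n) :
    toBraidA n h (PresentedGroup.of (some i)) = PresentedGroup.of i :=
  PresentedGroup.toGroup.of _

@[simp]
theorem toBraidA_of_none : toBraidA n h (PresentedGroup.of none) = bA n h :=
  PresentedGroup.toGroup.of _

theorem toBraidA_bAff : toBraidA n h (bAff n h) = bA n h := by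
  simp [bAff, bA, map_list_prod, Function.comp_def]

theorem toBraidA_eAff : toBraidA n h (eAff n h) = 1 := by
  simp [eAff, toBraidA_bAff]

theorem toBraidA_comp_toBraidAff : (toBraidA n h).comp (BraidA.toBraidAff n) = MonoidHom.id _ :=
  PresentedGroup.ext fun i => by simp

theorem mk_comp_toBraidAff_comp_toBraidA :
    ((QuotientGroup.mk' (Subgroup.normalClosure {eAff n h})).comp (BraidA.toBraidAff n)).comp
      (toBraidA n h) = QuotientGroup.mk' _ := by
  refine PresentedGroup.ext ?_
  rintro (_ | i)
  · simp only [MonoidHom.comp_apply, toBraidA_of_none, BraidA.toBraidAff_bA,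
      QuotientGroup.mk'_apply]
    have he : eAff n h ∈ Subgroup.normalClosure {eAff n h} :=
      Subgroup.subset_normalClosure (Set.mem_singleton _)
    rw [eq_comm, QuotientGroup.eq, ← eAff]
    exact he
  · simp

end BraidAff

theorem stmt_8 (n : ℕ) (hn : 2 ≤ n) :
    ∃ f : BraidAff n →* BraidA n,
      (∀ i : Fin n, f (PresentedGroup.of (some i)) = PresentedGroup.of i) ∧
      f (PresentedGroup.of none) = bA n (by omega) ∧
      Function.Surjective f ∧
      f.ker = Subgroup.normalClosure {eAff n (by omega)} ∧
      Nonempty ((BraidAff n ⧸ Subgroup.normalClosure {eAff n (by omega)}) ≃* BraidA n) := by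
  have h : 0 < n := by omega
  set f := BraidAff.toBraidA n h
  have hsurj : Function.Surjective f := fun y =>
    ⟨BraidA.toBraidAff n y, DFunLike.congr_fun (BraidAff.toBraidA_comp_toBraidAff h) y⟩
  have hker : f.ker = Subgroup.normalClosure {eAff n h} :=
    f.ker_eq_of_comp_eq_mk'
      (Subgroup.normalClosure_le_normal
        (Set.singleton_subset_iff.mpr (f.mem_ker.mpr (BraidAff.toBraidA_eAff h))))
      _ (BraidAff.mk_comp_toBraidAff_comp_toBraidA h)
  exact ⟨f, BraidAff.toBraidA_of_some h, BraidAff.toBraidA_of_none h, hsurj, hker,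
    ⟨(QuotientGroup.quotientMulEquivOfEq hker.symm).trans
      (QuotientGroup.quotientKerEquivOfSurjective f hsurj)⟩⟩
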